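/- Let E be a field, G a group, H a subgroup of G of index 2, and ρ : G → GL₂(E) a homomorphism such that ρ(h) is diagonal for every h ∈ H and ρ(g) is the antidiagonal matrix [[0, η'(g)],[η(g), 0]] with η(g), η'(g) ∈ Eˣ for every g ∈ G ∖ H. Let ρ' : G → M₂(E) be an adjoint 1-cocycle for ρ, write e_ij(g) for the (i,j) entry of ρ'(g), and define ρ̃(g) := (1 + ε ρ'(g)) ρ(g) over the dual numbers E[ε]. Then for every g ∈ G ∖ H: Tr ρ̃(g) = (η(g) e₁₂(g) + η'(g) e₂₁(g)) · ε, and this equals η(g) e₁₂(g²) · ε and also η'(g) e₂₁(g²) · ε. -/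

import Mathlib

/-! For `g ∉ H` the matrix `ρ(g)` is antidiagonal, so `Tr ρ̃(g)` has no constant term and its
`ε`-coefficient is `Tr(ρ'(g) ρ(g))`. The cocycle relation at `(g, g)` reads
`ρ'(g²) = ρ'(g) + ρ(g) ρ'(g) ρ(g)⁻¹`, and conjugation by `[[0, b], [c, 0]]` swaps the two
off-diagonal entries, scaling them by `b / c` and `c / b`; this gives both expressions
through `ρ'(g²)`. -/

open Matrix DualNumber

/-- The first-order deformation `ρ̃(g) = (1 + ε ρ'(g)) ρ(g)` of a representation
`ρ : G → GLₙ(E)` along a map `ρ' : G → Mₙ(E)`, with values in matrices over the dual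
numbers `E[ε]`. -/
def firstOrderDeformation {E : Type} [CommRing E] {n : ℕ} {G : Type} [Group G]
    (ρ : G →* GL (Fin n) E) (ρ' : G → Matrix (Fin n) (Fin n) E) (g : G) :
    Matrix (Fin n) (Fin n) (DualNumber E) :=
  (1 + (ε : DualNumber E) • (ρ' g).map (algebraMap E (DualNumber E))) *
    ((ρ g : Matrix (Fin n) (Fin n) E).map (algebraMap E (DualNumber E)))

theorem trace_firstOrderDeformation {E : Type} [CommRing E] {n : ℕ} {G : Type} [Group G]
    (ρ : G →* GL (Fin n) E) (ρ' : G → Matrix (Fin n) (Fin n) E) (g : G) :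
    (firstOrderDeformation ρ ρ' g).trace =
      algebraMap E (DualNumber E) (ρ g : Matrix (Fin n) (Fin n) E).trace +
        algebraMap E (DualNumber E) (ρ' g * ρ g).trace * ε := by
  rw [firstOrderDeformation, add_mul, one_mul, smul_mul_assoc, ← Matrix.map_mul,
    trace_add, trace_smul, ← AddMonoidHom.map_trace, ← AddMonoidHom.map_trace, smul_eq_mul,
    mul_comm]

theorem trace_mul_antidiagonal {R : Type*} [CommRing R] (M : Matrix (Fin 2) (Fin 2) R)
    (b c : R) :
    (M * !![0, b; c, 0]).trace = c * M 0 1 + b * M 1 0 := by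
  rw [eta_fin_two M, mul_fin_two, trace_fin_two_of]
  simp [mul_comm]

theorem inv_antidiagonal {K : Type*} [Field K] {b c : K} (hb : b ≠ 0) (hc : c ≠ 0) :
    (!![0, b; c, 0])⁻¹ = !![0, c⁻¹; b⁻¹, 0] := by
  refine inv_eq_right_inv ?_
  rw [mul_fin_two, one_fin_two]
  simp [hb, hc]

theorem antidiagonal_conj_apply_zero_one {K : Type*} [Field K] {b c : K} (hb : b ≠ 0)
    (hc : c ≠ 0) (M : Matrix (Fin 2) (Fin 2) K) :
    (!![0, b; c, 0] * M * (!![0, b; c, 0])⁻¹) 0 1 = b / c * M 1 0 := by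
  rw [inv_antidiagonal hb hc, eta_fin_two M, mul_fin_two, mul_fin_two]
  simp [div_eq_mul_inv, mul_assoc, mul_comm, mul_left_comm]

theorem antidiagonal_conj_apply_one_zero {K : Type*} [Field K] {b c : K} (hb : b ≠ 0)
    (hc : c ≠ 0) (M : Matrix (Fin 2) (Fin 2) K) :
    (!![0, b; c, 0] * M * (!![0, b; c, 0])⁻¹) 1 0 = c / b * M 0 1 := by
  rw [inv_antidiagonal hb hc, eta_fin_two M, mul_fin_two, mul_fin_two]
  simp [div_eq_mul_inv, mul_assoc, mul_comm, mul_left_comm]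

theorem statement7_general (E : Type) [Field E] (G : Type) [Group G] (H : Subgroup G)
    (ρ : G →* GL (Fin 2) E) (η η' : G → Eˣ)
    (hanti : ∀ g : G, g ∉ H →
      (ρ g : Matrix (Fin 2) (Fin 2) E) = !![0, (η' g : E); (η g : E), 0])
    (ρ' : G → Matrix (Fin 2) (Fin 2) E)
    (hcoc : ∀ g h : G, ρ' (g * h) =
      ρ' g + (ρ g : Matrix (Fin 2) (Fin 2) E) * ρ' h * ((ρ g)⁻¹ : GL (Fin 2) E)) :
    ∀ g : G, g ∉ H →
      (firstOrderDeformation ρ ρ' g).trace =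
        algebraMap E (DualNumber E) ((η g : E) * ρ' g 0 1 + (η' g : E) * ρ' g 1 0) *
          (ε : DualNumber E) ∧
      (firstOrderDeformation ρ ρ' g).trace =
        algebraMap E (DualNumber E) ((η g : E) * ρ' (g * g) 0 1) * (ε : DualNumber E) ∧
      (firstOrderDeformation ρ ρ' g).trace =
        algebraMap E (DualNumber E) ((η' g : E) * ρ' (g * g) 1 0) * (ε : DualNumber E) := by
  intro g hg
  have hη' := (η' g).ne_zero
  have hη := (η g).ne_zero
  have hsq : ρ' (g * g) = ρ' g + !![0, (η' g : E); (η g : E), 0] * ρ' g *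
      (!![0, (η' g : E); (η g : E), 0])⁻¹ := by
    rw [hcoc, coe_units_inv, hanti g hg]
  have htr : (firstOrderDeformation ρ ρ' g).trace =
      algebraMap E (DualNumber E) ((η g : E) * ρ' g 0 1 + (η' g : E) * ρ' g 1 0) * ε := by
    rw [trace_firstOrderDeformation, hanti g hg, trace_fin_two_of, trace_mul_antidiagonal,
      add_zero, map_zero, zero_add]
  refine ⟨htr, htr.trans ?_, htr.trans ?_⟩ <;> congr 2 <;>
    rw [hsq, Matrix.add_apply]
  · rw [antidiagonal_conj_apply_zero_one hη' hη]; field_simp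
  · rw [antidiagonal_conj_apply_one_zero hη' hη]; field_simp; ring

/-- **Statement 7.** Let `E` be a field, `G` a group, `H ≤ G` a subgroup of index `2`, and
`ρ : G → GL₂(E)` a homomorphism with `ρ(h)` diagonal for `h ∈ H` and
`ρ(g) = [[0, η'(g)],[η(g), 0]]` antidiagonal, with `η(g), η'(g) ∈ Eˣ`, for `g ∉ H`.  Let
`ρ' : G → M₂(E)` be an adjoint 1-cocycle for `ρ`, with entries `e_ij`, and set
`ρ̃(g) := (1 + ε ρ'(g)) ρ(g)` over the dual numbers `E[ε]`.  Then for every `g ∈ G ∖ H`: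
`Tr ρ̃(g) = (η(g) e₁₂(g) + η'(g) e₂₁(g)) · ε`, and this equals `η(g) e₁₂(g²) · ε` and also
`η'(g) e₂₁(g²) · ε`. -/
theorem statement7 (E : Type) [Field E] (G : Type) [Group G] (H : Subgroup G)
    (hH : H.index = 2) (ρ : G →* GL (Fin 2) E) (η η' : G → Eˣ)
    (hdiag : ∀ h : G, h ∈ H → (ρ h : Matrix (Fin 2) (Fin 2) E) 0 1 = 0 ∧
      (ρ h : Matrix (Fin 2) (Fin 2) E) 1 0 = 0)
    (hanti : ∀ g : G, g ∉ H →
      (ρ g : Matrix (Fin 2) (Fin 2) E) = !![0, (η' g : E); (η g : E), 0])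
    (ρ' : G → Matrix (Fin 2) (Fin 2) E)
    (hcoc : ∀ g h : G, ρ' (g * h) =
      ρ' g + (ρ g : Matrix (Fin 2) (Fin 2) E) * ρ' h * ((ρ g)⁻¹ : GL (Fin 2) E)) :
    ∀ g : G, g ∉ H →
      (firstOrderDeformation ρ ρ' g).trace =
        algebraMap E (DualNumber E) ((η g : E) * ρ' g 0 1 + (η' g : E) * ρ' g 1 0) *
          (ε : DualNumber E) ∧
      (firstOrderDeformation ρ ρ' g).trace =
        algebraMap E (DualNumber E) ((η g : E) * ρ' (g * g) 0 1) * (ε : DualNumber E) ∧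
      (firstOrderDeformation ρ ρ' g).trace =
        algebraMap E (DualNumber E) ((η' g : E) * ρ' (g * g) 1 0) * (ε : DualNumber E) :=
  statement7_general E G H ρ η η' hanti ρ' hcoc
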